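/- Let G be a compact topological group with Haar probability measure μ, V and E finite sets, s, t : E → V, and let w : G^E → ℝ be a nonnegative bounded measurable gauge-invariant weight with ∫ w dμ^E > 0 (gauge invariance: w(Φ_h g) = w(g) for all h : V → G, where (Φ_h g)(b) = h(s b)·g(b)·(h(t b))⁻¹). Let b₁, …, b_n ∈ E be distinct bonds such that each b_j has distinct endpoints (s b_j ≠ t b_j) and the endpoint sets {s b_j, t b_j} are pairwise disjoint for different j. Then for all bounded measurable F_j : G → ℂ, the expectation factorizes: ( ∫_{G^E} ∏_{j=1}^{n} F_j(g(b_j)) · w(g) dμ^E(g) ) / ( ∫_{G^E} w dμ^E ) = ∏_{j=1}^{n} ∫_G F_j dμ. -/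

import Mathlib

/-!
The bond variables `g (b j)` are observables of the probability measure `P` with density
proportional to `w`. For `k : G` and a bond `b j`, the gauge transformation equal to `k` at the
vertex `s (b j)` and to `1` elsewhere preserves the product Haar measure (Haar measure on a
compact group is also right invariant) and `w`, hence `P`. Because the endpoints are pairwise
distinct, it multiplies `g (b j)` on the left by `k` and fixes every other `g (b i)`. So the joint
law of `(g (b j))_j` is a probability measure on `G^n` invariant under left multiplication in
each coordinate separately, and uniqueness of Haar measure, applied one coordinate at a time,
identifies it with the product Haar measure; Fubini then factorizes the expectation.
-/

open MeasureTheory Measure Set Function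
open scoped ENNReal

theorem MeasureTheory.MeasurePreserving.withDensity_of_comp_eq {α : Type*} [MeasurableSpace α]
    {μ : Measure α} {f : α → α} (hf : MeasurePreserving f μ μ) {d : α → ℝ≥0∞}
    (hd : Measurable d) (hdf : ∀ x, d (f x) = d x) :
    MeasurePreserving f (μ.withDensity d) (μ.withDensity d) := by
  refine ⟨hf.measurable, Measure.ext fun A hA => ?_⟩
  rw [map_apply hf.measurable hA, withDensity_apply _ (hf.measurable hA), withDensity_apply _ hA,
    ← hf.setLIntegral_comp_preimage hA hd]
  simp only [hdf]

section CompactGroup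

variable {G : Type*} [Group G] [TopologicalSpace G] [IsTopologicalGroup G] [CompactSpace G]
  [MeasurableSpace G] [BorelSpace G] (μ : Measure G) [μ.IsHaarMeasure] [IsProbabilityMeasure μ]

theorem eq_measure_univ_smul_of_isMulLeftInvariant (ρ : Measure G) [IsFiniteMeasure ρ]
    [ρ.IsMulLeftInvariant] : ρ = ρ univ • μ := by
  have hρ := isMulInvariant_eq_smul_of_compactSpace ρ μ
  have hc : (haarScalarFactor ρ μ : ℝ≥0∞) = ρ univ := by
    conv_rhs => rw [hρ]
    simp
  conv_lhs => rw [hρ]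
  rw [ENNReal.smul_def, hc]

theorem isMulRightInvariant_of_compactSpace : μ.IsMulRightInvariant := by
  refine ⟨fun g => ?_⟩
  rw [eq_measure_univ_smul_of_isMulLeftInvariant μ (μ.map (· * g)),
    map_apply (measurable_mul_const g) MeasurableSet.univ, preimage_univ, measure_univ, one_smul]

theorem map_eq_measure_univ_smul_of_equivariant {X : Type*} [MeasurableSpace X]
    (ρ : Measure X) [IsFiniteMeasure ρ] {π : X → G} (hπ : Measurable π)
    (hΦ : ∀ k : G, ∃ Φ : X → X, MeasurePreserving Φ ρ ρ ∧ Semiconj π Φ (k * ·)) :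
    ρ.map π = ρ univ • μ := by
  have : (ρ.map π).IsMulLeftInvariant := ⟨fun k => by
    obtain ⟨Φ, hΦρ, hπΦ⟩ := hΦ k
    exact ((hπ.measurePreserving ρ).of_semiconj hΦρ hπΦ (measurable_const_mul k)).map_eq⟩
  rw [eq_measure_univ_smul_of_isMulLeftInvariant μ (ρ.map π), map_apply hπ MeasurableSet.univ,
    preimage_univ]

theorem eq_pi_of_measurePreserving_update_mul {ι : Type*} [Fintype ι] [DecidableEq ι]
    (ρ : Measure (ι → G)) [IsProbabilityMeasure ρ]
    (hρ : ∀ i (k : G), MeasurePreserving (fun x => update x i (k * x i)) ρ ρ) :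
    ρ = Measure.pi fun _ => μ := by
  refine (pi_eq fun A hA => ?_).symm
  suffices ∀ S : Finset ι, ρ ((S : Set ι).pi A) = ∏ i ∈ S, μ (A i) by
    simpa using this Finset.univ
  intro S
  induction S using Finset.induction with
  | empty => simp
  | @insert j S hj ih =>
    set C := (S : Set ι).pi A
    have hC : MeasurableSet C := MeasurableSet.pi S.countable_toSet fun i _ => hA i
    have hlaw : (ρ.restrict C).map (eval j) = ρ C • μ := by
      rw [map_eq_measure_univ_smul_of_equivariant μ _ (measurable_pi_apply j) fun k => ?_,
        restrict_apply_univ]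
      have hCk : (fun x => update x j (k * x j)) ⁻¹' C = C := by
        ext x
        simp only [C, mem_preimage, mem_pi, Finset.mem_coe]
        exact forall₂_congr fun i hi => by rw [update_of_ne (ne_of_mem_of_not_mem hi hj)]
      refine ⟨fun x => update x j (k * x j), ?_, fun x => update_self ..⟩
      simpa only [hCk] using (hρ j k).restrict_preimage hC
    rw [Finset.coe_insert, insert_pi, ← Measure.restrict_apply (measurable_pi_apply j (hA j)),
      ← map_apply (measurable_pi_apply j) (hA j), hlaw, ih, Finset.prod_insert hj,
      Measure.smul_apply, smul_eq_mul, mul_comm]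

end CompactGroup

section Gauge

variable {G : Type*} [Group G] {V E : Type*}

def gaugeTransform (s t : E → V) (h : V → G) (g : E → G) : E → G :=
  fun e => h (s e) * g e * (h (t e))⁻¹

theorem measurePreserving_gaugeTransform [TopologicalSpace G] [IsTopologicalGroup G]
    [CompactSpace G] [MeasurableSpace G] [BorelSpace G] (μ : Measure G) [μ.IsHaarMeasure]
    [IsProbabilityMeasure μ] [Fintype E] (s t : E → V) (h : V → G) :
    MeasurePreserving (gaugeTransform s t h) (Measure.pi fun _ : E => μ)
      (Measure.pi fun _ : E => μ) :=
  have := isMulRightInvariant_of_compactSpace μ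
  measurePreserving_pi _ _ fun _ =>
    (measurePreserving_mul_right μ _).comp (measurePreserving_mul_left μ _)

theorem semiconj_gaugeTransform_mulSingle [DecidableEq V] {ι : Type*} [DecidableEq ι]
    (s t : E → V) (b : ι → E) (j : ι) (k : G) (ht : ∀ i, t (b i) ≠ s (b j))
    (hs : ∀ i, i ≠ j → s (b i) ≠ s (b j)) :
    Semiconj (fun g i => g (b i)) (gaugeTransform s t (Pi.mulSingle (s (b j)) k))
      (fun x => update x j (k * x j)) := by
  intro g
  funext i
  by_cases hij : i = j
  · subst hij
    simp [gaugeTransform, ht i]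
  · simp [gaugeTransform, hs i hij, ht i, hij]

end Gauge

theorem withDensity_ofReal_apply_univ {α : Type*} [MeasurableSpace α] {ν : Measure α}
    {w : α → ℝ} (hw_nonneg : ∀ x, 0 ≤ w x) (hw_int : Integrable w ν) :
    (ν.withDensity fun x => ENNReal.ofReal (w x)) univ = ENNReal.ofReal (∫ x, w x ∂ν) := by
  rw [withDensity_apply _ MeasurableSet.univ, setLIntegral_univ,
    ofReal_integral_eq_lintegral_ofReal hw_int (ae_of_all _ hw_nonneg)]

theorem integral_normalized_withDensity {α : Type*} [MeasurableSpace α] {ν : Measure α}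
    {w : α → ℝ} (hw_meas : Measurable w) (hw_nonneg : ∀ x, 0 ≤ w x) (hw_int : Integrable w ν)
    (f : α → ℂ) :
    ∫ x, f x ∂(((ν.withDensity fun x => ENNReal.ofReal (w x)) univ)⁻¹ •
        ν.withDensity fun x => ENNReal.ofReal (w x))
      = (∫ x, f x * (w x : ℂ) ∂ν) / ∫ x, (w x : ℂ) ∂ν := by
  rw [integral_smul_measure, withDensity_ofReal_apply_univ hw_nonneg hw_int,
    integral_withDensity_eq_integral_toReal_smul hw_meas.ennreal_ofReal
      (ae_of_all _ fun _ => ENNReal.ofReal_lt_top),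
    integral_complex_ofReal, ENNReal.toReal_inv,
    ENNReal.toReal_ofReal (integral_nonneg hw_nonneg)]
  simp only [ENNReal.toReal_ofReal (hw_nonneg _), Complex.real_smul]
  rw [div_eq_inv_mul, Complex.ofReal_inv]
  simp_rw [mul_comm (w _ : ℂ)]

theorem elitzur_disjoint_bonds_general
    {G : Type*} [Group G] [TopologicalSpace G] [IsTopologicalGroup G] [CompactSpace G]
    [MeasurableSpace G] [BorelSpace G]
    (μ : Measure G) [μ.IsHaarMeasure] [IsProbabilityMeasure μ]
    {V E : Type*} [Fintype E] (s t : E → V)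
    (w : (E → G) → ℝ) (hw_meas : Measurable w) (hw_nonneg : ∀ g, 0 ≤ w g)
    (hw_pos : 0 < ∫ g, w g ∂(Measure.pi fun _ : E => μ))
    (hw_gauge : ∀ (h : V → G) (g : E → G),
      w (fun b => h (s b) * g b * (h (t b))⁻¹) = w g)
    (n : ℕ) (b : Fin n → E)
    (hb_loop : ∀ j, s (b j) ≠ t (b j))
    (hb_disj : ∀ j k, j ≠ k →
      s (b j) ≠ s (b k) ∧ s (b j) ≠ t (b k) ∧ t (b j) ≠ s (b k) ∧ t (b j) ≠ t (b k))
    (F : Fin n → G → ℂ) (hF_meas : ∀ j, Measurable (F j)) :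
    (∫ g, (∏ j, F j (g (b j))) * ((w g : ℝ) : ℂ) ∂(Measure.pi fun _ : E => μ)) /
        (∫ g, ((w g : ℝ) : ℂ) ∂(Measure.pi fun _ : E => μ))
      = ∏ j, ∫ x, F j x ∂μ := by
  classical
  set ν := Measure.pi fun _ : E => μ
  have hw_int : Integrable w ν := Integrable.of_integral_ne_zero hw_pos.ne'
  set νw := ν.withDensity fun g => ENNReal.ofReal (w g)
  have hνw : νw univ = ENNReal.ofReal (∫ g, w g ∂ν) :=
    withDensity_ofReal_apply_univ hw_nonneg hw_int
  have : IsFiniteMeasure νw := ⟨by simp [hνw]⟩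
  have : NeZero νw := ⟨fun h => by simp [h, hw_pos.not_ge] at hνw⟩
  set P := (νw univ)⁻¹ • νw
  set π : (E → G) → Fin n → G := fun g j => g (b j)
  have hπ : Measurable π := measurable_pi_lambda _ fun j => measurable_pi_apply (b j)
  have : IsProbabilityMeasure (P.map π) := isProbabilityMeasure_map hπ.aemeasurable
  have hlaw : P.map π = Measure.pi fun _ => μ := by
    refine eq_pi_of_measurePreserving_update_mul μ _ fun j k => ?_
    have hgauge : MeasurePreserving (gaugeTransform s t (Pi.mulSingle (s (b j)) k)) P P :=
      ((measurePreserving_gaugeTransform μ s t _).withDensity_of_comp_eq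
        hw_meas.ennreal_ofReal fun g => congrArg _ (hw_gauge _ g)).smul_measure _
    have ht : ∀ i, t (b i) ≠ s (b j) := fun i => by
      rcases eq_or_ne i j with rfl | hij
      exacts [(hb_loop i).symm, (hb_disj i j hij).2.2.1]
    exact (hπ.measurePreserving P).of_semiconj hgauge
      (semiconj_gaugeTransform_mulSingle s t b j k ht fun i hij => (hb_disj i j hij).1)
      (by fun_prop)
  calc _ = ∫ g, ∏ j, F j (π g j) ∂P :=
        (integral_normalized_withDensity hw_meas hw_nonneg hw_int _).symm
    _ = ∫ x, ∏ j, F j (x j) ∂(P.map π) :=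
        (integral_map hπ.aemeasurable (Finset.measurable_prod _ fun j _ =>
          (hF_meas j).comp (measurable_pi_apply j)).aestronglyMeasurable).symm
    _ = ∏ j, ∫ x, F j x ∂μ := by rw [hlaw, integral_fintype_prod_eq_prod]

/-- Elitzur's theorem for a finite collection of vertex-disjoint bonds: the normalized
expectation of a product of bounded measurable functions of distinct, pairwise vertex-disjoint
bond variables factorizes into the product of the free single-bond Haar averages. -/
theorem elitzur_disjoint_bonds
    {G : Type*} [Group G] [TopologicalSpace G] [IsTopologicalGroup G] [CompactSpace G]
    [MeasurableSpace G] [BorelSpace G]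
    (μ : Measure G) [μ.IsHaarMeasure] [IsProbabilityMeasure μ]
    {V E : Type*} [Fintype V] [Fintype E] (s t : E → V)
    (w : (E → G) → ℝ) (hw_meas : Measurable w) (hw_nonneg : ∀ g, 0 ≤ w g)
    (hw_bdd : ∃ C, ∀ g, w g ≤ C)
    (hw_pos : 0 < ∫ g, w g ∂(Measure.pi fun _ : E => μ))
    (hw_gauge : ∀ (h : V → G) (g : E → G),
      w (fun b => h (s b) * g b * (h (t b))⁻¹) = w g)
    (n : ℕ) (b : Fin n → E) (hb_inj : Function.Injective b)
    (hb_loop : ∀ j, s (b j) ≠ t (b j))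
    (hb_disj : ∀ j k, j ≠ k →
      s (b j) ≠ s (b k) ∧ s (b j) ≠ t (b k) ∧ t (b j) ≠ s (b k) ∧ t (b j) ≠ t (b k))
    (F : Fin n → G → ℂ) (hF_meas : ∀ j, Measurable (F j))
    (hF_bdd : ∀ j, ∃ C, ∀ x, ‖F j x‖ ≤ C) :
    (∫ g, (∏ j, F j (g (b j))) * ((w g : ℝ) : ℂ) ∂(Measure.pi fun _ : E => μ)) /
        (∫ g, ((w g : ℝ) : ℂ) ∂(Measure.pi fun _ : E => μ))
      = ∏ j, ∫ x, F j x ∂μ :=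
  elitzur_disjoint_bonds_general μ s t w hw_meas hw_nonneg hw_pos hw_gauge n b hb_loop hb_disj F
    hF_meas
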